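/- arXiv:1401.1727 — 3 statements merged into one kernel-verified Lean document; each statement's English description precedes it below -/
import Mathlib

section
/- For every m ∈ [0,1], β > 0 and every pair (v, φ) with v : ℝ → [0,1] absolutely continuous satisfying inf v = m, and φ : ℝ → [0,π] absolutely continuous with lim_{t→-∞} φ(t) = 0 and lim_{t→+∞} φ(t) = π, one has G_β(v,φ) ≥ √2 (2/3 - m + m³(1/3 + √β/(2√2))). -/
/-!
The density splits into a double-well part and a phase part, each bounded below pointwise, via
AM-GM, by the absolute value of an exact derivative: `√2 |(v - v³/3)'|` for the first (the
Modica–Mortola trick) and `(√β/2) m³ |(cos φ)'|` for the second, using `v ≥ m`. The total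
variation of `cos φ` over the line is at least `|cos π - cos 0| = 2`. For `v - v³/3`: integrability
forces the double-well energy to be small at points arbitrarily far out on either side, where
`v - v³/3` is close to `2/3`; so its total variation is at least twice its depth `2/3 - m + m³/3`
at points where `v` is close to its infimum `m`.
-/

open MeasureTheory Real Set Filter

/-- The one-dimensional energy `G_β`. -/
noncomputable def Gbeta (β : ℝ) (v φ : ℝ → ℝ) : ℝ :=
  (1/2) * ∫ t : ℝ, (deriv v t)^2 + (1 - (v t)^2)^2 / 2
    + (v t)^2 * (deriv φ t)^2 / 4 + (β/4) * (v t)^4 * (Real.sin (φ t))^2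

theorem MeasureTheory.IntegrableOn.exists_norm_lt_of_measure_eq_top {α E : Type*}
    [MeasurableSpace α] [NormedAddCommGroup E] {μ : Measure α} {g : α → E} {s : Set α}
    (hg : IntegrableOn g s μ) (hs : MeasurableSet s) (hμs : μ s = ⊤) {c : ℝ} (hc : 0 < c) :
    ∃ x ∈ s, ‖g x‖ < c := by
  by_contra! h
  have hconst : IntegrableOn (fun _ => c) s μ :=
    hg.norm.mono' aestronglyMeasurable_const <|
      ae_restrict_of_forall_mem hs fun x hx => by simpa [abs_of_pos hc] using h x hx
  rcases (integrableOn_const_iff (C := c)).1 hconst with hc0 | hfin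
  · simp [hc.ne'] at hc0
  · exact hfin.ne hμs

section TotalVariation

variable {F F' : ℝ → ℝ}

theorem abs_sub_le_intervalIntegral_abs_of_hasDerivAt (hF : ∀ x, HasDerivAt F (F' x) x)
    (hF' : Integrable F') {a b : ℝ} (hab : a ≤ b) :
    |F b - F a| ≤ ∫ t in a..b, |F' t| := by
  rw [← intervalIntegral.integral_eq_sub_of_hasDerivAt (fun x _ => hF x) hF'.intervalIntegrable]
  exact intervalIntegral.abs_integral_le_integral_abs hab

theorem intervalIntegral_abs_le_integral_abs (hF' : Integrable F') {a b : ℝ} (hab : a ≤ b) :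
    ∫ t in a..b, |F' t| ≤ ∫ t, |F' t| := by
  rw [intervalIntegral.integral_of_le hab]
  exact setIntegral_le_integral hF'.abs (Eventually.of_forall fun t => abs_nonneg _)

theorem abs_sub_le_integral_abs_of_tendsto (hF : ∀ x, HasDerivAt F (F' x) x)
    (hF' : Integrable F') {a b : ℝ} (hbot : Tendsto F atBot (nhds a))
    (htop : Tendsto F atTop (nhds b)) :
    |b - a| ≤ ∫ t, |F' t| := by
  have hlim : Tendsto (fun p : ℝ × ℝ => |F p.2 - F p.1|) (atBot ×ˢ atTop) (nhds |b - a|) :=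
    ((htop.comp tendsto_snd).sub (hbot.comp tendsto_fst)).abs
  refine le_of_tendsto hlim ?_
  filter_upwards [(eventually_le_atBot 0).prod_mk (eventually_ge_atTop 0)] with p hp
  exact (abs_sub_le_intervalIntegral_abs_of_hasDerivAt hF hF' (hp.1.trans hp.2)).trans
    (intervalIntegral_abs_le_integral_abs hF' (hp.1.trans hp.2))

/-- `g` is small somewhere on each side of `t₀`, where `F` is therefore nearly `M` again. -/
theorem two_mul_sub_le_integral_abs_of_le_add (hF : ∀ x, HasDerivAt F (F' x) x)
    (hF' : Integrable F') {g : ℝ → ℝ} (hg : Integrable g) {M : ℝ} (hFg : ∀ t, M ≤ F t + g t)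
    (t₀ : ℝ) : 2 * (M - F t₀) ≤ ∫ t, |F' t| := by
  refine le_of_forall_pos_le_add fun ε hε => ?_
  obtain ⟨s, hs, hgs⟩ := hg.integrableOn.exists_norm_lt_of_measure_eq_top measurableSet_Iio
    (volume_Iio (a := t₀)) (half_pos hε)
  obtain ⟨u, hu, hgu⟩ := hg.integrableOn.exists_norm_lt_of_measure_eq_top measurableSet_Ioi
    (volume_Ioi (a := t₀)) (half_pos hε)
  rw [Real.norm_eq_abs] at hgs hgu
  have hleft : M - F t₀ ≤ |F t₀ - F s| + ε / 2 := by
    linarith [hFg s, neg_abs_le (F t₀ - F s), le_abs_self (g s)]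
  have hright : M - F t₀ ≤ |F u - F t₀| + ε / 2 := by
    linarith [hFg u, le_abs_self (F u - F t₀), le_abs_self (g u)]
  have hvar : |F t₀ - F s| + |F u - F t₀| ≤ ∫ t, |F' t| := calc
    _ ≤ (∫ t in s..t₀, |F' t|) + ∫ t in t₀..u, |F' t| :=
      add_le_add (abs_sub_le_intervalIntegral_abs_of_hasDerivAt hF hF' hs.le)
        (abs_sub_le_intervalIntegral_abs_of_hasDerivAt hF hF' hu.le)
    _ = ∫ t in s..u, |F' t| :=
      intervalIntegral.integral_add_adjacent_intervals hF'.abs.intervalIntegrable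
        hF'.abs.intervalIntegrable
    _ ≤ ∫ t, |F' t| := intervalIntegral_abs_le_integral_abs hF' (hs.le.trans hu.le)
  linarith

end TotalVariation

/-- `x - x³/3` is the primitive of `√(2 W)` for the double well `W x = (1 - x²)² / 4`. -/
noncomputable def wellPrimitive (x : ℝ) : ℝ := x - x ^ 3 / 3

theorem hasDerivAt_wellPrimitive_comp {v : ℝ → ℝ} {t : ℝ} (hv : DifferentiableAt ℝ v t) :
    HasDerivAt (fun t => wellPrimitive (v t)) (deriv v t * (1 - v t ^ 2)) t :=
  (hv.hasDerivAt.sub ((hv.hasDerivAt.pow 3).div_const 3)).congr_deriv (by norm_num; ring)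

theorem wellPrimitive_one_le {x : ℝ} (hx : 0 ≤ x) :
    wellPrimitive 1 ≤ wellPrimitive x + (1 - x ^ 2) ^ 2 := by
  unfold wellPrimitive
  nlinarith [mul_nonneg (sq_nonneg (1 - x)) (mul_nonneg hx (by linarith : (0 : ℝ) ≤ 3 * x + 5))]

theorem wellPrimitive_sub_le {m x : ℝ} (h : m ≤ x) :
    wellPrimitive x - wellPrimitive m ≤ x - m := by
  unfold wellPrimitive
  nlinarith [mul_nonneg (sub_nonneg.2 h) (add_nonneg (sq_nonneg (x + m / 2)) (sq_nonneg m))]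

/-- The Modica–Mortola bound: `v` dips from (nearly) `1` down to its infimum `m` and climbs back. -/
theorem two_mul_le_integral_abs_deriv_mul {v : ℝ → ℝ} {m : ℝ} (hv : Differentiable ℝ v)
    (hv0 : ∀ t, 0 ≤ v t) (hinf : IsGLB (range v) m)
    (hpot : Integrable fun t => (1 - v t ^ 2) ^ 2)
    (hder : Integrable fun t => deriv v t * (1 - v t ^ 2)) :
    2 * (2 / 3 - m + m ^ 3 / 3) ≤ ∫ t, |deriv v t * (1 - v t ^ 2)| := by
  set V := ∫ t, |deriv v t * (1 - v t ^ 2)|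
  have hdepth (t : ℝ) : 2 * (wellPrimitive 1 - wellPrimitive (v t)) ≤ V :=
    two_mul_sub_le_integral_abs_of_le_add (fun t => hasDerivAt_wellPrimitive_comp (hv t)) hder
      hpot (fun t => wellPrimitive_one_le (hv0 t)) t
  have hlower : wellPrimitive 1 - V / 2 - wellPrimitive m + m ≤ m := by
    refine hinf.2 ?_
    rintro _ ⟨t, rfl⟩
    linarith [hdepth t, wellPrimitive_sub_le (hinf.1 ⟨t, rfl⟩)]
  unfold wellPrimitive at hlower
  linarith

theorem sqrt_two_mul_abs_mul_le (a b : ℝ) : √2 * |a * b| ≤ a ^ 2 + b ^ 2 / 2 := by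
  rw [abs_mul]
  nlinarith [sq_nonneg (√2 * |a| - |b|), Real.sq_sqrt (zero_le_two : (0 : ℝ) ≤ 2), sq_abs a,
    sq_abs b]

theorem sqrt_mul_abs_pow_three_mul_le {β : ℝ} (hβ : 0 ≤ β) (x s p : ℝ) :
    √β / 2 * |x| ^ 3 * |s * p| ≤ x ^ 2 * p ^ 2 / 4 + β / 4 * x ^ 4 * s ^ 2 := by
  obtain ⟨r, hr, rfl⟩ : ∃ r, 0 ≤ r ∧ β = r ^ 2 := ⟨√β, Real.sqrt_nonneg β, (Real.sq_sqrt hβ).symm⟩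
  rw [Real.sqrt_sq hr, abs_mul, ← sq_abs x, ← sq_abs s, ← sq_abs p,
    show x ^ 4 = (x ^ 2) ^ 2 by ring, ← sq_abs x]
  nlinarith [sq_nonneg (|x| * |p| - r * |x| ^ 2 * |s|)]

theorem two_mul_le_integral_abs_const_mul_sin_mul_deriv {φ : ℝ → ℝ} (hφ : Differentiable ℝ φ)
    {k : ℝ} (hk : 0 ≤ k) (hint : Integrable fun t => k * (sin (φ t) * deriv φ t))
    (hbot : Tendsto φ atBot (nhds 0)) (htop : Tendsto φ atTop (nhds π)) :
    2 * k ≤ ∫ t, |k * (sin (φ t) * deriv φ t)| := by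
  have h := abs_sub_le_integral_abs_of_tendsto (F := fun t => -(k * cos (φ t))) (a := -k) (b := k)
    (fun t => ((hφ t).hasDerivAt.cos.const_mul k).neg.congr_deriv (by ring)) hint
    (by simpa using (((continuous_cos.tendsto 0).comp hbot).const_mul k).neg)
    (by simpa using (((continuous_cos.tendsto π).comp htop).const_mul k).neg)
  rwa [show k - -k = 2 * k by ring, abs_of_nonneg (by positivity)] at h

noncomputable def gbetaDensity (β : ℝ) (v φ : ℝ → ℝ) (t : ℝ) : ℝ :=
  deriv v t ^ 2 + (1 - v t ^ 2) ^ 2 / 2 + v t ^ 2 * deriv φ t ^ 2 / 4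
    + β / 4 * v t ^ 4 * sin (φ t) ^ 2

theorem Gbeta_eq_integral_gbetaDensity (β : ℝ) (v φ : ℝ → ℝ) :
    Gbeta β v φ = 1 / 2 * ∫ t, gbetaDensity β v φ t :=
  rfl

section GbetaDensity

variable {β m : ℝ} {v φ : ℝ → ℝ}

theorem sq_deriv_add_le_gbetaDensity (hβ : 0 ≤ β) (t : ℝ) :
    deriv v t ^ 2 + (1 - v t ^ 2) ^ 2 / 2 ≤ gbetaDensity β v φ t := by
  have : 0 ≤ v t ^ 2 * deriv φ t ^ 2 / 4 + β / 4 * v t ^ 4 * sin (φ t) ^ 2 := by positivity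
  unfold gbetaDensity
  linarith

theorem sqrt_two_mul_abs_add_abs_le_gbetaDensity (hβ : 0 ≤ β) (hm : 0 ≤ m) {t : ℝ}
    (hmv : m ≤ v t) :
    √2 * |deriv v t * (1 - v t ^ 2)| + |√β * m ^ 3 / 2 * (sin (φ t) * deriv φ t)|
      ≤ gbetaDensity β v φ t := by
  have hwell := sqrt_two_mul_abs_mul_le (deriv v t) (1 - v t ^ 2)
  have hphase := sqrt_mul_abs_pow_three_mul_le hβ (v t) (sin (φ t)) (deriv φ t)
  have hm3 : √β * m ^ 3 / 2 * |sin (φ t) * deriv φ t|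
      ≤ √β / 2 * |v t| ^ 3 * |sin (φ t) * deriv φ t| := by
    have := pow_le_pow_left₀ hm (hmv.trans (le_abs_self (v t))) 3
    rw [mul_div_right_comm]
    gcongr
  rw [abs_mul (√β * m ^ 3 / 2) (sin (φ t) * deriv φ t),
    abs_of_nonneg (by positivity : 0 ≤ √β * m ^ 3 / 2)]
  unfold gbetaDensity
  linarith

variable (h : Integrable (gbetaDensity β v φ))
include h

theorem integrable_sq_one_sub_sq (hβ : 0 ≤ β) (hv : Continuous v) :
    Integrable fun t => (1 - v t ^ 2) ^ 2 :=
  (h.const_mul 2).mono' (by fun_prop) <| ae_of_all _ fun t => by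
    rw [Real.norm_eq_abs, abs_of_nonneg (by positivity)]
    linarith [sq_deriv_add_le_gbetaDensity (v := v) (φ := φ) hβ t, sq_nonneg (deriv v t)]

theorem integrable_deriv_mul_one_sub_sq (hβ : 0 ≤ β) (hv : Continuous v) :
    Integrable fun t => deriv v t * (1 - v t ^ 2) :=
  (h.div_const √2).mono' (by have := measurable_deriv v; fun_prop) <| ae_of_all _ fun t => by
    rw [Real.norm_eq_abs, le_div_iff₀ (by positivity), mul_comm]
    exact (sqrt_two_mul_abs_mul_le _ _).trans (sq_deriv_add_le_gbetaDensity hβ t)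

theorem integrable_const_mul_sin_mul_deriv (hβ : 0 ≤ β) (hm : 0 ≤ m) (hmv : ∀ t, m ≤ v t)
    (hφ : Continuous φ) :
    Integrable fun t => √β * m ^ 3 / 2 * (sin (φ t) * deriv φ t) :=
  h.mono' (by have := measurable_deriv φ; fun_prop) <| ae_of_all _ fun t => by
    rw [Real.norm_eq_abs]
    linarith [sqrt_two_mul_abs_add_abs_le_gbetaDensity (φ := φ) hβ hm (hmv t),
      mul_nonneg (Real.sqrt_nonneg 2) (abs_nonneg (deriv v t * (1 - v t ^ 2)))]

end GbetaDensity

theorem lower_bound_Gbeta_general (β m : ℝ) (hβ : 0 < β) (hm : m ∈ Set.Icc (0:ℝ) 1)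
    (v φ : ℝ → ℝ)
    (hv : Differentiable ℝ v) (hv01 : ∀ t, v t ∈ Set.Icc (0:ℝ) 1)
    (hinf : IsGLB (Set.range v) m)
    (hφ : Differentiable ℝ φ)
    (hbot : Tendsto φ atBot (nhds 0)) (htop : Tendsto φ atTop (nhds Real.pi))
    (hint : Integrable (fun t => (deriv v t)^2 + (1 - (v t)^2)^2 / 2
      + (v t)^2 * (deriv φ t)^2 / 4 + (β/4) * (v t)^4 * (Real.sin (φ t))^2)) :
    Gbeta β v φ ≥ Real.sqrt 2 * (2/3 - m + m^3 * (1/3 + Real.sqrt β / (2 * Real.sqrt 2))) := by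
  have hint' : Integrable (gbetaDensity β v φ) := hint
  have hmv (t : ℝ) : m ≤ v t := hinf.1 ⟨t, rfl⟩
  have hder := integrable_deriv_mul_one_sub_sq hint' hβ.le hv.continuous
  have hphase := integrable_const_mul_sin_mul_deriv hint' hβ.le hm.1 hmv hφ.continuous
  have hwell := two_mul_le_integral_abs_deriv_mul hv (fun t => (hv01 t).1) hinf
    (integrable_sq_one_sub_sq hint' hβ.le hv.continuous) hder
  have hcos := two_mul_le_integral_abs_const_mul_sin_mul_deriv hφ (by have := hm.1; positivity)
    hphase hbot htop
  set k := √β * m ^ 3 / 2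
  have hsum : √2 * (∫ t, |deriv v t * (1 - v t ^ 2)|) + ∫ t, |k * (sin (φ t) * deriv φ t)|
      ≤ ∫ t, gbetaDensity β v φ t := by
    rw [← integral_const_mul, ← integral_add (hder.abs.const_mul _) hphase.abs]
    exact integral_mono ((hder.abs.const_mul _).add hphase.abs) hint'
      fun t => sqrt_two_mul_abs_add_abs_le_gbetaDensity hβ.le hm.1 (hmv t)
  have hrhs : √2 * (2 / 3 - m + m ^ 3 * (1 / 3 + √β / (2 * √2)))
      = √2 * (2 / 3 - m + m ^ 3 / 3) + k := by
    field_simp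
    ring
  rw [Gbeta_eq_integral_gbetaDensity, ge_iff_le, hrhs]
  linarith [mul_le_mul_of_nonneg_left hwell (Real.sqrt_nonneg 2)]

theorem lower_bound_Gbeta (β m : ℝ) (hβ : 0 < β) (hm : m ∈ Set.Icc (0:ℝ) 1)
    (v φ : ℝ → ℝ)
    (hv : Differentiable ℝ v) (hv01 : ∀ t, v t ∈ Set.Icc (0:ℝ) 1)
    (hinf : IsGLB (Set.range v) m)
    (hφ : Differentiable ℝ φ) (hφ0π : ∀ t, φ t ∈ Set.Icc (0:ℝ) Real.pi)
    (hbot : Tendsto φ atBot (nhds 0)) (htop : Tendsto φ atTop (nhds Real.pi))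
    (hint : Integrable (fun t => (deriv v t)^2 + (1 - (v t)^2)^2 / 2
      + (v t)^2 * (deriv φ t)^2 / 4 + (β/4) * (v t)^4 * (Real.sin (φ t))^2)) :
    Gbeta β v φ ≥ Real.sqrt 2 * (2/3 - m + m^3 * (1/3 + Real.sqrt β / (2 * Real.sqrt 2))) :=
  lower_bound_Gbeta_general β m hβ hm v φ hv hv01 hinf hφ hbot htop hint
end

section
/- Let n = 1, λ > 0, ρ(x) = λ² - x² on (-λ,λ), and α = 1/2. The half interval A = (-λ, 0] satisfies ∫_A ρ dx = ∫_{(0,λ)} ρ dx and has weighted interface energy (2√2/3) ρ(0)^{3/2} = (2√2/3) λ³. The radial competitor for mass 1/2 is the centered interval (-λR, λR) with R determined by ∫_{-λR}^{λR} (λ² - x²) dx = ½ ∫_{-λ}^{λ} (λ² - x²) dx, i.e. 3R - R³ = 1, and its energy is 2 · (2√2/3) λ³ (1 - R²)^{3/2}. One has 2(1 - R²)^{3/2} > 1, so the half interval has strictly smaller energy than the symmetric competitor. -/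
open Real Set intervalIntegral

lemma integ (a b c : ℝ) : (∫ x in a..b, (c - x^2)) = c*(b-a) - (b^3 - a^3)/3 := by
  have : (∫ x in a..b, (c - x^2)) = (∫ x in a..b, (c:ℝ)) - ∫ x in a..b, x^2 := by
    rw [← intervalIntegral.integral_sub intervalIntegrable_const
      (intervalIntegrable_pow 2)]
  rw [this, intervalIntegral.integral_const, integral_pow, smul_eq_mul]
  ring

theorem symmetry_breaking_dim_one (lam R : ℝ) (hlam : 0 < lam)
    (hR : R ∈ Set.Ioo (0:ℝ) 1) (hroot : 3 * R - R^3 = 1) :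
    -- the half interval (-λ,0] contains half the mass
    (∫ x in (-lam)..0, (lam^2 - x^2)) = ∫ x in (0:ℝ)..lam, (lam^2 - x^2) ∧
    -- the centered interval (-λR, λR) contains half the mass
    (∫ x in (-(lam*R))..(lam*R), (lam^2 - x^2))
      = (1/2) * ∫ x in (-lam)..lam, (lam^2 - x^2) ∧
    -- the key inequality 2(1-R²)^{3/2} > 1
    1 < 2 * (1 - R^2) ^ ((3:ℝ)/2) ∧
    -- the half interval beats the symmetric competitor
    (2 * Real.sqrt 2 / 3) * lam^3
      < 2 * ((2 * Real.sqrt 2 / 3) * lam^3 * (1 - R^2) ^ ((3:ℝ)/2)) := by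
  obtain ⟨hR0, hR1⟩ := hR
  -- bound on R : R < 1/2
  have hRhalf : R < 1/2 := by nlinarith [sq_nonneg R]
  have h34 : (3:ℝ)/4 < 1 - R^2 := by nlinarith
  have hpos : (0:ℝ) < 1 - R^2 := by nlinarith
  -- key : (1-R²)^{3/2} > 1/2
  have hkey : (1:ℝ)/2 < (1 - R^2) ^ ((3:ℝ)/2) := by
    have h1 : ((1 - R^2) ^ ((3:ℝ)/2))^2 = (1 - R^2)^3 := by
      rw [← Real.rpow_natCast ((1 - R^2) ^ ((3:ℝ)/2)) 2,
        ← Real.rpow_mul hpos.le, ← Real.rpow_natCast (1 - R^2) 3]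
      norm_num
    have h2 : ((1:ℝ)/2)^2 < ((1 - R^2) ^ ((3:ℝ)/2))^2 := by
      rw [h1]; nlinarith
    have h3 : (0:ℝ) < (1 - R^2) ^ ((3:ℝ)/2) := Real.rpow_pos_of_pos hpos _
    nlinarith
  refine ⟨?_, ?_, by linarith, ?_⟩
  · rw [integ, integ]; ring
  · rw [integ, integ]
    have : lam^3 * (3*R - R^3) = lam^3 * 1 := by rw [hroot]
    nlinarith [this]
  · have hE : 0 < (2 * Real.sqrt 2 / 3) * lam^3 := by positivity
    nlinarith [mul_lt_mul_of_pos_left hkey hE]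
end

section
/- For every admissible pair (v,φ) with v ≥ m > 0 on ℝ, φ : ℝ → [0,π] absolutely continuous with lim_{-∞}φ = 0 and lim_{+∞}φ = π, one has ½∫_ℝ ¼ v² φ'² + (β/4) v⁴ sin²φ dt ≥ (√β/4) m³ ∫_ℝ |sin φ| |φ'| dt ≥ (√β/2) m³, using ∫₀^π sin x dx = 2 and the change of variables formula ∫_ℝ |sin φ| |φ'| dt ≥ |∫_ℝ sin(φ) φ' dt| = ∫₀^π sin x dx. -/
open MeasureTheory Real Set Filter

/-!
Pointwise, AM–GM gives `¼ v²φ'² + (β/4) v⁴ sin²φ ≥ (√β/2) v³ |sin φ| |φ'|`, and `v ≥ m` lowers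
`v³` to `m³`; integrating yields the first inequality. For the second, `|sin φ| |φ'| ≥ sin φ · φ'`,
and `sin φ · φ'` is the derivative of `-cos φ`, which runs from `-cos 0 = -1` to `-cos π = 1`.
-/

lemma sqrt_mul_pow_three_mul_abs_mul_abs_le {β m V s a : ℝ} (hβ : 0 ≤ β) (hm : 0 ≤ m)
    (hmV : m ≤ V) :
    √β / 2 * m ^ 3 * (|s| * |a|) ≤ V ^ 2 * a ^ 2 / 4 + β / 4 * V ^ 4 * s ^ 2 := by
  have hamgm := two_mul_le_add_sq (V * |a| / 2) (√β * V ^ 2 * |s| / 2)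
  calc √β / 2 * m ^ 3 * (|s| * |a|) ≤ √β / 2 * V ^ 3 * (|s| * |a|) := by gcongr
    _ = 2 * (V * |a| / 2) * (√β * V ^ 2 * |s| / 2) := by ring
    _ ≤ (V * |a| / 2) ^ 2 + (√β * V ^ 2 * |s| / 2) ^ 2 := hamgm
    _ = V ^ 2 * a ^ 2 / 4 + β / 4 * V ^ 4 * s ^ 2 := by
      simp only [mul_pow, div_pow, sq_abs, sq_sqrt hβ]; ring

lemma integral_comp_mul_deriv_of_tendsto {F f φ : ℝ → ℝ} {a b : ℝ}
    (hF : ∀ x, HasDerivAt F (f x) x) (hφ : Differentiable ℝ φ)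
    (hbot : Tendsto φ atBot (nhds a)) (htop : Tendsto φ atTop (nhds b))
    (hint : Integrable fun t => f (φ t) * deriv φ t) :
    ∫ t, f (φ t) * deriv φ t = F b - F a :=
  integral_of_hasDerivAt_of_tendsto (fun t => (hF (φ t)).comp t (hφ t).hasDerivAt) hint
    (((hF a).continuousAt.tendsto).comp hbot) (((hF b).continuousAt.tendsto).comp htop)

lemma two_le_integral_abs_sin_comp_mul_abs_deriv {φ : ℝ → ℝ} (hφ : Differentiable ℝ φ)
    (hbot : Tendsto φ atBot (nhds 0)) (htop : Tendsto φ atTop (nhds π))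
    (hint : Integrable fun t => |sin (φ t)| * |deriv φ t|) :
    2 ≤ ∫ t, |sin (φ t)| * |deriv φ t| := by
  have hint_sin : Integrable fun t => sin (φ t) * deriv φ t := by
    refine hint.mono ?_ (Eventually.of_forall fun t => ?_)
    · exact ((continuous_sin.comp hφ.continuous).measurable.mul
        (measurable_deriv φ)).aestronglyMeasurable
    · simp only [norm_mul, Real.norm_eq_abs, abs_abs, le_refl]
  have hneg_cos (x : ℝ) : HasDerivAt (fun y => -cos y) (sin x) x :=
    neg_neg (sin x) ▸ (hasDerivAt_cos x).neg
  calc (2 : ℝ) = -cos π - -cos 0 := by norm_num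
    _ = ∫ t, sin (φ t) * deriv φ t :=
      (integral_comp_mul_deriv_of_tendsto hneg_cos hφ hbot htop hint_sin).symm
    _ ≤ ∫ t, |sin (φ t)| * |deriv φ t| :=
      integral_mono hint_sin hint fun t => abs_mul (sin (φ t)) (deriv φ t) ▸ le_abs_self _

theorem amgm_phase_lower_bound_general (β m : ℝ) (hβ : 0 < β) (hm : 0 < m)
    (v φ : ℝ → ℝ)
    (hvm : ∀ t, m ≤ v t)
    (hφ : Differentiable ℝ φ)
    (hbot : Tendsto φ atBot (nhds 0)) (htop : Tendsto φ atTop (nhds Real.pi))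
    (hint : Integrable (fun t => (v t)^2 * (deriv φ t)^2 / 4
      + (β/4) * (v t)^4 * (Real.sin (φ t))^2))
    (hint' : Integrable (fun t => |Real.sin (φ t)| * |deriv φ t|)) :
    (1/2) * (∫ t : ℝ, (v t)^2 * (deriv φ t)^2 / 4
        + (β/4) * (v t)^4 * (Real.sin (φ t))^2)
      ≥ (Real.sqrt β / 4) * m^3 * ∫ t : ℝ, |Real.sin (φ t)| * |deriv φ t| ∧
    (Real.sqrt β / 4) * m^3 * (∫ t : ℝ, |Real.sin (φ t)| * |deriv φ t|)
      ≥ (Real.sqrt β / 2) * m^3 := by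
  have hmono : √β / 2 * m ^ 3 * ∫ t, |sin (φ t)| * |deriv φ t|
      ≤ ∫ t, (v t)^2 * (deriv φ t)^2 / 4 + (β/4) * (v t)^4 * (sin (φ t))^2 := by
    rw [← integral_const_mul]
    exact integral_mono (hint'.const_mul _) hint fun t =>
      sqrt_mul_pow_three_mul_abs_mul_abs_le hβ.le hm.le (hvm t)
  have htwo := two_le_integral_abs_sin_comp_mul_abs_deriv hφ hbot htop hint'
  have hscaled := mul_le_mul_of_nonneg_left htwo (by positivity : 0 ≤ √β / 4 * m ^ 3)
  exact ⟨by linarith, by linarith⟩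

theorem amgm_phase_lower_bound (β m : ℝ) (hβ : 0 < β) (hm : 0 < m)
    (v φ : ℝ → ℝ)
    (hv : Differentiable ℝ v) (hvm : ∀ t, m ≤ v t)
    (hφ : Differentiable ℝ φ) (hφr : ∀ t, φ t ∈ Set.Icc (0:ℝ) Real.pi)
    (hbot : Tendsto φ atBot (nhds 0)) (htop : Tendsto φ atTop (nhds Real.pi))
    (hint : Integrable (fun t => (v t)^2 * (deriv φ t)^2 / 4
      + (β/4) * (v t)^4 * (Real.sin (φ t))^2))
    (hint' : Integrable (fun t => |Real.sin (φ t)| * |deriv φ t|)) :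
    (1/2) * (∫ t : ℝ, (v t)^2 * (deriv φ t)^2 / 4
        + (β/4) * (v t)^4 * (Real.sin (φ t))^2)
      ≥ (Real.sqrt β / 4) * m^3 * ∫ t : ℝ, |Real.sin (φ t)| * |deriv φ t| ∧
    (Real.sqrt β / 4) * m^3 * (∫ t : ℝ, |Real.sin (φ t)| * |deriv φ t|)
      ≥ (Real.sqrt β / 2) * m^3 :=
  amgm_phase_lower_bound_general β m hβ hm v φ hvm hφ hbot htop hint hint'
end
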